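/- arXiv:math/0311461 — 6 statements merged into one kernel-verified Lean document; each statement's English description precedes it below -/
import Mathlib

section
/- Let A be a unital C*-algebra and a_1, ..., a_n ∈ A. Then the following are equivalent: (1) there exist c_1, ..., c_n ∈ A such that c_1a_1 + ... + c_na_n is invertible; (2) there exist c_1, ..., c_n ∈ A such that c_1a_1 + ... + c_na_n = 1; (3) a_1*a_1 + a_2*a_2 + ... + a_n*a_n is invertible. -/
/-!
Cauchy–Schwarz in the Hilbert `A`-module `Aⁿ` gives
`(∑ cᵢ aᵢ)* (∑ cᵢ aᵢ) ≤ ‖∑ cᵢ cᵢ*‖ • ∑ aᵢ* aᵢ`, so `∑ cᵢ aᵢ = 1` makes a positive multiple of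
`∑ aᵢ* aᵢ` dominate `1`, hence invertible. Conversely, `∑ aᵢ* aᵢ` is itself a left combination
of the `aᵢ`, and any invertible left combination `u` yields `∑ (u⁻¹ cᵢ) aᵢ = 1`.
-/

open scoped InnerProductSpace WithCStarModule

theorem exists_sum_mul_eq_one_of_isUnit {R ι : Type*} [Ring R] [Fintype ι] {a c : ι → R}
    (h : IsUnit (∑ i, c i * a i)) : ∃ d : ι → R, ∑ i, d i * a i = 1 := by
  obtain ⟨u, hu⟩ := h
  refine ⟨fun i => ↑u⁻¹ * c i, ?_⟩
  simp only [mul_assoc, ← Finset.mul_sum, ← hu, Units.inv_mul]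

section CStarAlgebra

variable {A ι : Type*} [CStarAlgebra A] [PartialOrder A] [StarOrderedRing A] [Fintype ι]

theorem star_sum_mul_mul_sum_mul_le_norm_smul (a c : ι → A) :
    star (∑ i, c i * a i) * ∑ i, c i * a i ≤
      ‖∑ i, c i * star (c i)‖ • ∑ i, star (a i) * a i := by
  -- In `C⋆ᵐᵒᵈ(A, ι → A)` the inner product is `⟪x, y⟫ = ∑ yᵢ * star xᵢ`, hence `star a`.
  let x : C⋆ᵐᵒᵈ(A, ι → A) := (WithCStarModule.equiv A _).symm c
  let y : C⋆ᵐᵒᵈ(A, ι → A) := (WithCStarModule.equiv A _).symm (star a)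
  have hyx : ⟪y, x⟫_A = ∑ i, c i * a i := by
    simp [WithCStarModule.pi_inner, WithCStarModule.inner_def, x, y]
  have cauchy_schwarz := CStarModule.inner_mul_inner_swap_le (A := A) (x := x) (y := y)
  rw [← CStarModule.star_inner, hyx, WithCStarModule.pi_norm_sq] at cauchy_schwarz
  simpa [WithCStarModule.pi_inner, WithCStarModule.inner_def, x, y] using cauchy_schwarz

theorem isUnit_of_one_le_smul {b : A} {r : ℝ} (h : 1 ≤ r • b) : IsUnit b := by
  have hrb : IsUnit (algebraMap ℝ A r * b) := by
    rw [← Algebra.smul_def]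
    exact CStarAlgebra.isUnit_of_le 1 h
  exact ((Algebra.commute_algebraMap_left r b).isUnit_mul_iff.mp hrb).2

theorem isUnit_sum_star_mul_self_of_sum_mul_eq_one {a c : ι → A} (h : ∑ i, c i * a i = 1) :
    IsUnit (∑ i, star (a i) * a i) := by
  refine isUnit_of_one_le_smul (r := ‖∑ i, c i * star (c i)‖) ?_
  simpa [h] using star_sum_mul_mul_sum_mul_le_norm_smul a c

end CStarAlgebra

/-- In a unital C*-algebra, for a₁, …, aₙ the following are equivalent:
(1) some left combination ∑ cᵢ aᵢ is invertible, (2) some left combination equals 1,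
(3) ∑ aᵢ* aᵢ is invertible. -/
theorem stmt_0 {A : Type*} [CStarAlgebra A] (n : ℕ) (a : Fin n → A) :
    ((∃ c : Fin n → A, IsUnit (∑ i, c i * a i)) ↔ (∃ c : Fin n → A, ∑ i, c i * a i = 1)) ∧
    ((∃ c : Fin n → A, ∑ i, c i * a i = 1) ↔ IsUnit (∑ i, star (a i) * a i)) := by
  let _ : PartialOrder A := CStarAlgebra.spectralOrder A
  have _ : StarOrderedRing A := CStarAlgebra.spectralOrderedRing A
  refine ⟨⟨fun ⟨_, hc⟩ => exists_sum_mul_eq_one_of_isUnit hc,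
      fun ⟨c, hc⟩ => ⟨c, hc ▸ isUnit_one⟩⟩, ⟨fun ⟨_, hc⟩ => ?_, fun h => ?_⟩⟩
  · exact isUnit_sum_star_mul_self_of_sum_mul_eq_one hc
  · exact exists_sum_mul_eq_one_of_isUnit (c := fun i => star (a i)) h
end

section
/- Let 1 ∈ A ⊂ B be an inclusion of unital C*-algebras. If there exist elements v_1, ..., v_n ∈ B such that B = Av_1 + Av_2 + ... + Av_n, then tsr(B) ≤ n · tsr(A), where tsr denotes topological stable rank. -/
/-- `Lg R n` is the set of n-tuples generating `R` as a left ideal. -/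
def Lg (R : Type*) [Ring R] (n : ℕ) : Set (Fin n → R) :=
  {b | ∃ c : Fin n → R, ∑ i, c i * b i = 1}

/-- Topological stable rank: the least `n` such that `Lg R n` is dense in `Rⁿ`
(as an extended natural number; `⊤` if no such `n` exists). -/
noncomputable def tsr (R : Type*) [Ring R] [TopologicalSpace R] : ℕ∞ :=
  sInf {N : ℕ∞ | ∃ n : ℕ, (n : ℕ∞) = N ∧ Dense (Lg R n)}

/-!
If `Lg_k(A)` is dense, then (Rieffel) the left-invertible `(k + q) × (q + 1)` matrices over `A`
are dense. By induction on `q`: a matrix whose first column, below the corner, lies in `Lg`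
is brought to the block form `diag(1, X)` by unipotent row and column operations `1 ± u wᵀ`
with `w ⬝ u = 0`, and `X` is approximated by left-invertible matrices.

A left-invertible `(k + n - 1) × n` matrix `T` over `A` gives the tuple `b = T v` in `B`, which
generates `B`: if `S T = 1` and `1 = u ⬝ v`, then `(u S) ⬝ b = 1`. Since `B = A v₁ + ⋯ + A vₙ`,
every tuple in `B` has this form, so `Lg_{k+n-1}(B)` is dense and `tsr B ≤ k + n - 1 ≤ n k`.
-/

open Matrix Set

theorem Dense.of_surjective_mapsTo {X Y : Type*} [TopologicalSpace X] [TopologicalSpace Y]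
    {f : X → Y} {s : Set X} {t : Set Y} (hs : Dense s) (hf : Continuous f)
    (hsurj : f.Surjective) (hst : MapsTo f s t) : Dense t :=
  (hsurj.denseRange.dense_image hf hs).mono hst.image_subset

theorem isNilpotent_vecMulVec {R m : Type*} [Ring R] [Fintype m] [DecidableEq m] {u w : m → R}
    (h : w ⬝ᵥ u = 0) : IsNilpotent (vecMulVec u w) :=
  ⟨2, by rw [sq, vecMulVec_mul_vecMulVec, h, zero_smul, vecMulVec_zero]⟩

def leftInvertibleMatrices (R : Type*) [Ring R] (p q : ℕ) : Set (Matrix (Fin p) (Fin q) R) :=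
  {T | ∃ S : Matrix (Fin q) (Fin p) R, S * T = 1}

section BlockMat

variable {R : Type*} {p q : ℕ}

/-- The block matrix `[[r 0, tail r], [a, Y]]`. -/
def blockMat (r : Fin (q + 1) → R) (a : Fin p → R) (Y : Matrix (Fin p) (Fin q) R) :
    Matrix (Fin (p + 1)) (Fin (q + 1)) R :=
  of (Fin.cons r fun i => (Fin.cons (a i) (Y i) : Fin (q + 1) → R))

theorem blockMat_surjective :
    (fun x : (Fin (q + 1) → R) × (Fin p → R) × Matrix (Fin p) (Fin q) R =>
      blockMat x.1 x.2.1 x.2.2).Surjective := by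
  intro T
  refine ⟨(T 0, fun i => T i.succ 0, fun i j => T i.succ j.succ), ?_⟩
  ext i j
  refine Fin.cases ?_ (fun i => ?_) i <;> refine Fin.cases ?_ (fun j => ?_) j <;> simp [blockMat]

theorem continuous_blockMat [TopologicalSpace R] :
    Continuous fun x : (Fin (q + 1) → R) × (Fin p → R) × Matrix (Fin p) (Fin q) R =>
      blockMat x.1 x.2.1 x.2.2 := by
  unfold blockMat
  fun_prop

variable [Ring R]

theorem blockMat_mul_blockMat {o : ℕ} (Y : Matrix (Fin p) (Fin q) R)
    (X : Matrix (Fin q) (Fin o) R) :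
    blockMat (Pi.single 0 1) 0 Y * blockMat (Pi.single 0 1) 0 X =
      blockMat (Pi.single 0 1) 0 (Y * X) := by
  ext i j
  refine Fin.cases ?_ (fun i => ?_) i <;> refine Fin.cases ?_ (fun j => ?_) j <;>
    simp [blockMat, mul_apply, Fin.sum_univ_succ]

theorem blockMat_one : blockMat (Pi.single 0 1) 0 (1 : Matrix (Fin q) (Fin q) R) = 1 := by
  ext i j
  refine Fin.cases ?_ (fun i => ?_) i <;> refine Fin.cases ?_ (fun j => ?_) j <;>
    simp [blockMat, one_apply, Fin.succ_ne_zero, (Fin.succ_ne_zero _).symm]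

theorem mapsTo_blockMat_leftInvertibleMatrices :
    MapsTo (blockMat (Pi.single 0 1) 0) (leftInvertibleMatrices R p q)
      (leftInvertibleMatrices R (p + 1) (q + 1)) := by
  rintro X ⟨S, hS⟩
  exact ⟨blockMat (Pi.single 0 1) 0 S, by rw [blockMat_mul_blockMat, hS, blockMat_one]⟩

theorem exists_isUnit_mul_blockMat_eq_of_dotProduct_eq_one {a s : Fin p → R} (hs : s ⬝ᵥ a = 1)
    (r : Fin (q + 1) → R) (Y : Matrix (Fin p) (Fin q) R) :
    ∃ L : Matrix (Fin (p + 1)) (Fin (p + 1)) R, IsUnit L ∧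
      ∃ r' : Fin (q + 1) → R, r' 0 = 1 ∧ L * blockMat r a Y = blockMat r' a Y := by
  refine ⟨1 + vecMulVec (Pi.single 0 1) (Fin.cons 0 ((1 - r 0) • s)),
    (isNilpotent_vecMulVec (by simp [dotProduct, Fin.sum_univ_succ])).isUnit_one_add,
    r + (1 - r 0) • s ᵥ* of (fun i => (Fin.cons (a i) (Y i) : Fin (q + 1) → R)), ?_, ?_⟩
  · have hs' : ∑ i, s i * a i = 1 := hs
    simp [vecMul, dotProduct, hs']
  · rw [Matrix.add_mul, Matrix.one_mul, vecMulVec_mul]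
    ext i j
    refine Fin.cases ?_ (fun i => ?_) i <;> refine Fin.cases ?_ (fun j => ?_) j <;>
      simp [blockMat, vecMulVec_apply, vecMul, dotProduct, Fin.sum_univ_succ, mul_assoc,
        Finset.mul_sum]

theorem exists_isUnit_mul_blockMat_eq_of_apply_zero_eq_one {r : Fin (q + 1) → R} (hr : r 0 = 1)
    (a : Fin p → R) (Y : Matrix (Fin p) (Fin q) R) :
    ∃ L : Matrix (Fin (p + 1)) (Fin (p + 1)) R, IsUnit L ∧
      ∃ Y' : Matrix (Fin p) (Fin q) R, L * blockMat r a Y = blockMat r 0 Y' := by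
  refine ⟨1 - vecMulVec (Fin.cons 0 a) (Pi.single 0 1),
    (isNilpotent_vecMulVec (by simp [dotProduct, Fin.sum_univ_succ])).isUnit_one_sub,
    Y - vecMulVec a (Fin.tail r), ?_⟩
  rw [Matrix.sub_mul, Matrix.one_mul, vecMulVec_mul]
  ext i j
  refine Fin.cases ?_ (fun i => ?_) i <;> refine Fin.cases ?_ (fun j => ?_) j <;>
    simp [blockMat, vecMulVec_apply, Fin.tail, hr]

theorem exists_isUnit_blockMat_mul_eq_of_apply_zero_eq_one {r : Fin (q + 1) → R} (hr : r 0 = 1)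
    (Y : Matrix (Fin p) (Fin q) R) :
    ∃ W : Matrix (Fin (q + 1)) (Fin (q + 1)) R, IsUnit W ∧
      blockMat r 0 Y * W = blockMat (Pi.single 0 1) 0 Y := by
  refine ⟨1 - vecMulVec (Pi.single 0 1) (Fin.cons 0 (Fin.tail r)),
    (isNilpotent_vecMulVec (by simp [dotProduct, Fin.sum_univ_succ])).isUnit_one_sub, ?_⟩
  rw [Matrix.mul_sub, Matrix.mul_one, mul_vecMulVec]
  ext i j
  refine Fin.cases ?_ (fun i => ?_) i <;> refine Fin.cases ?_ (fun j => ?_) j <;>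
    simp [blockMat, vecMulVec_apply, Fin.tail, hr]

theorem exists_isUnit_mul_blockMat_mul_eq {a s : Fin p → R} (hs : s ⬝ᵥ a = 1)
    (r : Fin (q + 1) → R) (Y : Matrix (Fin p) (Fin q) R) :
    ∃ (L : Matrix (Fin (p + 1)) (Fin (p + 1)) R) (W : Matrix (Fin (q + 1)) (Fin (q + 1)) R),
      IsUnit L ∧ IsUnit W ∧ ∃ Y', L * blockMat r a Y * W = blockMat (Pi.single 0 1) 0 Y' := by
  obtain ⟨L₁, hL₁, r', hr', h₁⟩ := exists_isUnit_mul_blockMat_eq_of_dotProduct_eq_one hs r Y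
  obtain ⟨L₂, hL₂, Y', h₂⟩ := exists_isUnit_mul_blockMat_eq_of_apply_zero_eq_one hr' a Y
  obtain ⟨W, hW, h₃⟩ := exists_isUnit_blockMat_mul_eq_of_apply_zero_eq_one hr' Y'
  refine ⟨L₂ * L₁, W, hL₂.mul hL₁, hW, Y', ?_⟩
  rw [Matrix.mul_assoc L₂, h₁, h₂, h₃]

end BlockMat

section LeftInvertibleMatrices

variable {R : Type*} [Ring R] [TopologicalSpace R] {p q : ℕ}

theorem dense_leftInvertibleMatrices_one (h : Dense (Lg R p)) :
    Dense (leftInvertibleMatrices R p 1) := by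
  refine h.of_surjective_mapsTo (f := replicateCol (Fin 1)) (by fun_prop)
    (fun T => ⟨fun i => T i 0, by ext i j; simp [Subsingleton.elim j 0]⟩) ?_
  rintro b ⟨c, hc⟩
  refine ⟨replicateRow (Fin 1) c, ?_⟩
  ext i j
  fin_cases i; fin_cases j
  simpa [mul_apply] using hc

theorem dense_Lg_of_dense_leftInvertibleMatrices
    (h : Dense (leftInvertibleMatrices R p (q + 1))) : Dense (Lg R p) := by
  refine h.of_surjective_mapsTo (f := fun T i => T i 0) (by fun_prop)
    (fun b => ⟨replicateCol (Fin (q + 1)) b, rfl⟩) ?_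
  rintro T ⟨S, hS⟩
  exact ⟨S 0, by simpa [mul_apply] using congrFun₂ hS 0 0⟩

variable [IsTopologicalRing R]

theorem mem_closure_leftInvertibleMatrices_of_isUnit {T : Matrix (Fin p) (Fin q) R}
    {L : Matrix (Fin p) (Fin p) R} {W : Matrix (Fin q) (Fin q) R} (hL : IsUnit L) (hW : IsUnit W)
    (h : L * T * W ∈ closure (leftInvertibleMatrices R p q)) :
    T ∈ closure (leftInvertibleMatrices R p q) := by
  obtain ⟨L', hLL', hL'L⟩ := isUnit_iff_exists.mp hL
  obtain ⟨W', hWW', hW'W⟩ := isUnit_iff_exists.mp hW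
  have hT : L' * (L * T * W) * W' = T := by
    simp only [Matrix.mul_assoc, hWW', Matrix.mul_one, ← Matrix.mul_assoc L', hL'L, Matrix.one_mul]
  rw [← hT]
  refine map_mem_closure (f := fun M => L' * M * W') (by fun_prop) h ?_
  rintro M ⟨S, hS⟩
  refine ⟨W * S * L, ?_⟩
  calc W * S * L * (L' * M * W') = W * (S * (L * L') * M) * W' := by simp only [Matrix.mul_assoc]
    _ = 1 := by rw [hLL', Matrix.mul_one, hS, Matrix.mul_one, hWW']

theorem dense_leftInvertibleMatrices_succ (hLI : Dense (leftInvertibleMatrices R p q))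
    (hLg : Dense (Lg R p)) : Dense (leftInvertibleMatrices R (p + 1) (q + 1)) := by
  suffices h : ∀ r a Y, a ∈ Lg R p →
      blockMat r a Y ∈ closure (leftInvertibleMatrices R (p + 1) (q + 1)) from
    dense_closure.mp <| (dense_univ.prod (hLg.prod dense_univ)).of_surjective_mapsTo
      continuous_blockMat blockMat_surjective fun x hx => h _ _ _ hx.2.1
  rintro r a Y ⟨s, hs⟩
  obtain ⟨L, W, hL, hW, Y', hY'⟩ := exists_isUnit_mul_blockMat_mul_eq hs r Y
  refine mem_closure_leftInvertibleMatrices_of_isUnit hL hW ?_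
  rw [hY']
  exact map_mem_closure (by unfold blockMat; fun_prop) (hLI Y')
    mapsTo_blockMat_leftInvertibleMatrices

theorem dense_leftInvertibleMatrices_add (h : Dense (Lg R p)) :
    ∀ q, Dense (leftInvertibleMatrices R (p + q) (q + 1))
  | 0 => dense_leftInvertibleMatrices_one h
  | q + 1 =>
    have ih := dense_leftInvertibleMatrices_add h q
    dense_leftInvertibleMatrices_succ ih (dense_Lg_of_dense_leftInvertibleMatrices ih)

end LeftInvertibleMatrices

theorem dense_Lg_of_dense_leftInvertibleMatrices_of_forall_eq_sum {A B : Type*} [Ring A]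
    [TopologicalSpace A] [Ring B] [TopologicalSpace B] [IsTopologicalRing B] (f : A →+* B)
    (hf : Continuous f) {n p : ℕ} (v : Fin n → B)
    (h : ∀ b : B, ∃ a : Fin n → A, b = ∑ i, f (a i) * v i)
    (hA : Dense (leftInvertibleMatrices A p n)) : Dense (Lg B p) := by
  refine hA.of_surjective_mapsTo (f := fun T => T.map f *ᵥ v) (by fun_prop) ?_ ?_
  · intro b
    choose a ha using fun k => h (b k)
    exact ⟨of a, funext fun k => (ha k).symm⟩
  · obtain ⟨u, hu⟩ := h 1
    rintro T ⟨S, hS⟩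
    refine ⟨(f ∘ u) ᵥ* S.map f, ?_⟩
    change (f ∘ u) ᵥ* S.map f ⬝ᵥ T.map f *ᵥ v = 1
    rw [← dotProduct_mulVec, mulVec_mulVec, ← Matrix.map_mul, hS,
      Matrix.map_one f f.map_zero f.map_one, one_mulVec]
    exact hu.symm

section Tsr

variable {R : Type*} [Ring R] [TopologicalSpace R]

theorem tsr_le_of_dense {n : ℕ} (h : Dense (Lg R n)) : tsr R ≤ n :=
  sInf_le ⟨n, rfl, h⟩

theorem exists_dense_Lg_of_tsr_ne_top (h : tsr R ≠ ⊤) :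
    ∃ k : ℕ, (k : ℕ∞) = tsr R ∧ Dense (Lg R k) :=
  csInf_mem (s := {N : ℕ∞ | ∃ n : ℕ, (n : ℕ∞) = N ∧ Dense (Lg R n)})
    (nonempty_iff_ne_empty.mpr fun he => h (by rw [tsr, he, sInf_empty]))

theorem subsingleton_of_dense_Lg_zero (h : Dense (Lg R 0)) : Subsingleton R := by
  obtain ⟨_, c, hc⟩ := h.nonempty
  exact subsingleton_of_zero_eq_one (by simpa using hc)

theorem dense_Lg_zero [Subsingleton R] : Dense (Lg R 0) :=
  fun _ => subset_closure ⟨0, Subsingleton.elim _ _⟩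

end Tsr

/-- If `1 ∈ A ⊆ B` and `B = Av₁ + ⋯ + Avₙ`, then `tsr B ≤ n · tsr A`. -/
theorem stmt_3 {B : Type*} [CStarAlgebra B] (A : StarSubalgebra ℂ B) (n : ℕ)
    (v : Fin n → B) (h : ∀ b : B, ∃ a : Fin n → A, b = ∑ i, (a i : B) * v i) :
    tsr B ≤ (n : ℕ∞) * tsr A := by
  rcases subsingleton_or_nontrivial B with _ | _
  · exact (tsr_le_of_dense dense_Lg_zero).trans zero_le
  obtain ⟨n, rfl⟩ : ∃ m, n = m + 1 := by
    refine Nat.exists_eq_add_one.mpr (Nat.pos_of_ne_zero ?_)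
    rintro rfl
    obtain ⟨a, ha⟩ := h 1
    exact one_ne_zero (ha.trans (by simp))
  rcases eq_or_ne (tsr A) ⊤ with hA | hA
  · rw [hA, ENat.mul_top (by exact_mod_cast n.succ_ne_zero)]
    exact le_top
  obtain ⟨k, hk, hA⟩ := exists_dense_Lg_of_tsr_ne_top hA
  have hk0 : k ≠ 0 := by
    rintro rfl
    exact not_subsingleton A (subsingleton_of_dense_Lg_zero hA)
  have hB := dense_Lg_of_dense_leftInvertibleMatrices_of_forall_eq_sum (A.subtype : A →+* B)
    continuous_subtype_val v h (dense_leftInvertibleMatrices_add hA n)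
  calc tsr B ≤ (k + n : ℕ) := tsr_le_of_dense hB
    _ ≤ ((n + 1) * k : ℕ) := by gcongr; nlinarith [Nat.one_le_iff_ne_zero.mpr hk0]
    _ = _ := by push_cast [hk]; rfl
end

section
/- Let A be a unital C*-algebra, G a finite group, and α an action of G on A. Then tsr(A ⋊_α G) ≤ |G| · tsr(A), where |G| is the order of G. -/
/-- `B`, together with an embedding `ι : A → B` and unitaries `u g` implementing the
action `α` of the finite group `G`, is (a copy of) the crossed product `A ⋊_α G`:
`α` is an action by *-automorphisms, the `u g` are unitaries with `u g u h = u (gh)`,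
`u 1 = 1`, implementing `α`, and every element of `B` is uniquely of the form
`∑ g, ι (a g) * u g`. -/
def IsCrossedProduct {A B G : Type*} [CStarAlgebra A] [CStarAlgebra B] [Group G] [Fintype G]
    (α : G → (A ≃⋆ₐ[ℂ] A)) (ι : A →⋆ₐ[ℂ] B) (u : G → B) : Prop :=
  (∀ a : A, α 1 a = a) ∧ (∀ g h (a : A), α (g * h) a = α g (α h a)) ∧
  Function.Injective ι ∧
  (∀ g, star (u g) * u g = 1 ∧ u g * star (u g) = 1) ∧
  (∀ g h, u g * u h = u (g * h)) ∧ u 1 = 1 ∧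
  (∀ g a, u g * ι a * star (u g) = ι (α g a)) ∧
  (∀ b : B, ∃ a : G → A, b = ∑ g, ι (a g) * u g) ∧
  (∀ a : G → A, (∑ g, ι (a g) * u g) = 0 → ∀ g, a g = 0)

/-!
Write `k = |G|`. Every element of `B` is `∑ g, ι (a g) * u g`, so `B` is a quotient of the free
left `A`-module `A^k` by a continuous map sending the basis vector at `1 ∈ G` to `1 ∈ B`. A
`km`-tuple in `B` thus lifts to a `km × k` matrix over `A`, and if the rows of that matrix span
`A^k`, the tuple generates `B` as a left ideal. It therefore suffices that, when `Lg A m` is dense,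
so are the `km × k` matrices whose rows span `A^k`. This goes by induction on `k`: perturb the
first column of the first block of `m` rows into `Lg A m`, so that these rows combine to a vector
`(1, w)`; subtracting multiples of it clears the first column of the remaining rows, and the
remaining `(k - 1)m × (k - 1)` matrix is perturbed by induction.
-/

section RowSpan

variable {R : Type*} [Ring R]

theorem Submodule.eq_top_of_cons_mem {k : ℕ} {ι : Type*} {N : Submodule R (Fin (k + 1) → R)}
    {w : Fin k → R} {Z : ι → Fin k → R} (hw : Fin.cons 1 w ∈ N)
    (hZ : Submodule.span R (Set.range Z) = ⊤) (hN : ∀ i, Fin.cons 0 (Z i) ∈ N) : N = ⊤ := by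
  let consZero :=
    (Fin.consLinearEquiv R fun _ : Fin (k + 1) => R).toLinearMap ∘ₗ
      LinearMap.inr R R (Fin k → R)
  have htail : ∀ z, Fin.cons 0 z ∈ N := fun z =>
    (Submodule.span_le (p := N.comap consZero)).mpr (Set.range_subset_iff.mpr hN)
      (hZ ▸ Submodule.mem_top)
  refine eq_top_iff'.mpr fun v => ?_
  have hv : v = v 0 • Fin.cons 1 w + Fin.cons 0 (Fin.tail v - v 0 • w) := by
    ext j
    refine Fin.cases ?_ (fun i => ?_) j <;> simp [Fin.tail]
  rw [hv]
  exact N.add_mem (N.smul_mem _ hw) (htail _)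

variable [TopologicalSpace R] [IsTopologicalRing R]

theorem mem_closure_span_eq_top_of_mem_Lg {m k : ℕ}
    (hk : Dense {Z : Fin k × Fin m → Fin k → R | Submodule.span R (Set.range Z) = ⊤})
    {S : Fin (k + 1) × Fin m → Fin (k + 1) → R} (hS : (fun t => S (0, t) 0) ∈ Lg R m) :
    S ∈ closure {S : Fin (k + 1) × Fin m → Fin (k + 1) → R |
      Submodule.span R (Set.range S) = ⊤} := by
  obtain ⟨d, hd⟩ := hS
  set w : Fin k → R := ∑ t, d t • Fin.tail (S (0, t))
  let extend (Z : Fin k × Fin m → Fin k → R) : Fin (k + 1) × Fin m → Fin (k + 1) → R :=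
    fun r => Fin.cases (S (0, r.2))
      (fun i => S (i.succ, r.2) 0 • Fin.cons 1 w + Fin.cons 0 (Z (i, r.2))) r.1
  have hextend : Continuous extend := by
    refine continuous_pi fun ⟨p, t⟩ => ?_
    refine Fin.cases ?_ (fun i => ?_) p
    · exact continuous_const
    · simp only [extend, Fin.cases_succ]
      fun_prop
  have hrecover :
      extend (fun r => Fin.tail (S (r.1.succ, r.2)) - S (r.1.succ, r.2) 0 • w) = S := by
    ext ⟨p, t⟩ j
    refine Fin.cases ?_ (fun i => ?_) p
    · rfl
    · refine Fin.cases ?_ (fun j => ?_) j <;> simp [extend, Fin.tail]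
  rw [← hrecover]
  refine map_mem_closure hextend (hk.closure_eq ▸ Set.mem_univ _) fun Z hZ => ?_
  set N := Submodule.span R (Set.range (extend Z))
  have hw : Fin.cons 1 w ∈ N := by
    have : Fin.cons 1 w = ∑ t, d t • extend Z (0, t) := by
      ext j
      refine Fin.cases ?_ (fun j => ?_) j
      · simpa [extend, Finset.sum_apply] using hd.symm
      · simp [extend, w, Finset.sum_apply, Fin.tail]
    rw [this]
    exact N.sum_mem fun t _ => N.smul_mem _ (Submodule.subset_span ⟨_, rfl⟩)
  refine Submodule.eq_top_of_cons_mem hw hZ fun ⟨i, t⟩ => ?_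
  have : Fin.cons 0 (Z (i, t)) = extend Z (i.succ, t) - S (i.succ, t) 0 • Fin.cons 1 w := by
    simp [extend]
  rw [this]
  exact N.sub_mem (Submodule.subset_span ⟨_, rfl⟩) (N.smul_mem _ hw)

theorem dense_span_eq_top_of_dense_Lg {m : ℕ} (hm : Dense (Lg R m)) (k : ℕ) :
    Dense {S : Fin k × Fin m → Fin k → R | Submodule.span R (Set.range S) = ⊤} := by
  induction k with
  | zero => simp only [Subsingleton.elim _ (⊤ : Submodule R (Fin 0 → R))]; exact dense_univ
  | succ k ih =>
    intro S
    let replaceColumn (x : Fin m → R) : Fin (k + 1) × Fin m → Fin (k + 1) → R :=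
      fun r => Fin.cases (Fin.cons (x r.2) (Fin.tail (S (0, r.2)))) (fun i => S (i.succ, r.2)) r.1
    have hreplace : Continuous replaceColumn := by
      refine continuous_pi fun ⟨p, t⟩ => ?_
      refine Fin.cases ?_ (fun i => ?_) p
      · simp only [replaceColumn, Fin.cases_zero]
        fun_prop
      · exact continuous_const
    have hrecover : replaceColumn (fun t => S (0, t) 0) = S := by
      ext ⟨p, t⟩ j
      refine Fin.cases ?_ (fun i => ?_) p
      · exact congrFun (Fin.cons_self_tail _) j
      · rfl
    rw [← hrecover, ← closure_closure]
    exact map_mem_closure hreplace (hm.closure_eq ▸ Set.mem_univ _) fun x hx =>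
      mem_closure_span_eq_top_of_mem_Lg ih hx

theorem dense_Lg_mul_of_generators {B : Type*} [Ring B] [TopologicalSpace B]
    [IsTopologicalRing B] {φ : R →+* B} (hφ : Continuous φ) {k : ℕ} {v : Fin k → B}
    {i₀ : Fin k} (hv : v i₀ = 1) (hspan : ∀ b, ∃ a : Fin k → R, ∑ i, φ (a i) * v i = b)
    {m : ℕ} (hm : Dense (Lg R m)) :
    Dense (Lg B (k * m)) := by
  let L (a : Fin k → R) : B := ∑ i, φ (a i) * v i
  have hL (c : Fin k × Fin m → R) (S : Fin k × Fin m → Fin k → R) :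
      L (∑ r, c r • S r) = ∑ r, φ (c r) * L (S r) := by
    simp only [L, Finset.sum_apply, Pi.smul_apply, smul_eq_mul, map_sum, map_mul, Finset.sum_mul,
      Finset.mul_sum, mul_assoc]
    exact Finset.sum_comm
  let e := (finProdFinEquiv : Fin k × Fin m ≃ Fin (k * m))
  let Ψ (S : Fin k × Fin m → Fin k → R) : Fin (k * m) → B := fun n => L (S (e.symm n))
  have hΨ : Continuous Ψ := by fun_prop
  choose a ha using hspan
  have hsurj : Function.Surjective Ψ := fun b =>
    ⟨fun r => a (b (e r)), funext fun n => by simp [Ψ, L, ha]⟩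
  refine (hsurj.denseRange.dense_image hΨ (dense_span_eq_top_of_dense_Lg hm k)).mono ?_
  rintro _ ⟨S, hS, rfl⟩
  obtain ⟨c, hc⟩ := (Submodule.mem_span_range_iff_exists_fun R).mp
    (hS ▸ Submodule.mem_top : Pi.single i₀ 1 ∈ Submodule.span R (Set.range S))
  refine ⟨fun n => φ (c (e.symm n)), ?_⟩
  calc ∑ n, φ (c (e.symm n)) * Ψ S n = ∑ r, φ (c r) * L (S r) :=
      e.symm.sum_comp fun r => φ (c r) * L (S r)
    _ = L (Pi.single i₀ 1) := by rw [← hc, hL]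
    _ = 1 := by simp [L, Pi.single_apply, hv]

end RowSpan

theorem tsr_le_mul_tsr {A B : Type*} [Ring A] [TopologicalSpace A] [Ring B] [TopologicalSpace B]
    {k : ℕ} (hk : k ≠ 0) (h : ∀ m, Dense (Lg A m) → Dense (Lg B (k * m))) :
    tsr B ≤ k * tsr A := by
  rcases eq_top_or_lt_top (tsr A) with htop | hlt
  · simp [htop, hk]
  · have hne : {N : ℕ∞ | ∃ n : ℕ, (n : ℕ∞) = N ∧ Dense (Lg A n)}.Nonempty :=
      Set.nonempty_iff_ne_empty.mpr fun h => hlt.ne (by rw [tsr, h, sInf_empty])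
    obtain ⟨m, hmA, hm⟩ := csInf_mem hne
    calc tsr B ≤ (k * m : ℕ) := sInf_le ⟨k * m, rfl, h m hm⟩
      _ = k * tsr A := by rw [tsr, ← hmA, Nat.cast_mul]

open scoped CStarAlgebra

/-- For a unital C*-algebra `A`, a finite group `G` and an action `α` of
`G` on `A`, the crossed product satisfies `tsr (A ⋊_α G) ≤ |G| · tsr A`. -/
theorem stmt_5 {A B G : Type*} [CStarAlgebra A] [CStarAlgebra B] [Group G] [Fintype G]
    (α : G → (A ≃⋆ₐ[ℂ] A)) (ι : A →⋆ₐ[ℂ] B) (u : G → B)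
    (hB : IsCrossedProduct α ι u) :
    tsr B ≤ (Fintype.card G : ℕ∞) * tsr A := by
  obtain ⟨-, -, -, -, -, hu1, -, hgen, -⟩ := hB
  let σ := Fintype.equivFin G
  refine tsr_le_mul_tsr Fintype.card_ne_zero fun m hm =>
    dense_Lg_mul_of_generators (φ := (ι : A →+* B)) (map_continuous ι) (v := u ∘ σ.symm)
      (i₀ := σ 1) (by simpa using hu1) (fun b => ?_) hm
  obtain ⟨a, rfl⟩ := hgen b
  exact ⟨a ∘ σ.symm, σ.symm.sum_comp fun g => ι (a g) * u g⟩
end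

section
/- Let 1 ∈ A ⊂ B be an inclusion of unital C*-algebras and E : B → A a faithful conditional expectation of index-finite type with quasi-basis {(v_i, v_i*)}_{i=1}^n. Suppose a projection p ∈ A admits elements y_1, ..., y_m ∈ A with Σ_{j=1}^m y_j p y_j* = 1. Then the family {(p v_i y_j p, p y_j* v_i* p)}_{1≤i≤n, 1≤j≤m} is a quasi-basis for the conditional expectation F_p = E|_{pBp} : pBp → pAp. -/
/-- `E : B → B` is a conditional expectation onto the unital C*-subalgebra `A` of `B`:
it is an `A`-bimodule projection onto `A`, star-preserving and positive. -/
def IsCondExp {B : Type*} [CStarAlgebra B] (A : StarSubalgebra ℂ B) (E : B →ₗ[ℂ] B) : Prop :=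
  (∀ b : B, E b ∈ A) ∧ (∀ a ∈ A, E a = a) ∧
  (∀ a ∈ A, ∀ b : B, ∀ c ∈ A, E (a * b * c) = a * E b * c) ∧
  (∀ b : B, E (star b) = star (E b)) ∧ (∀ b : B, ∃ x : B, E (star b * b) = star x * x)

/-- `E` is faithful. -/
def IsFaithful {B : Type*} [CStarAlgebra B] (E : B →ₗ[ℂ] B) : Prop :=
  ∀ b : B, E (star b * b) = 0 → b = 0

/-- `{(vᵢ, vᵢ*)}` is a quasi-basis for `E`: every `x` satisfies
`x = ∑ vᵢ E(vᵢ* x) = ∑ E(x vᵢ) vᵢ*`.  In particular `E` is of index-finite type. -/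
def IsQuasiBasis {B : Type*} [CStarAlgebra B] (E : B →ₗ[ℂ] B) {n : ℕ} (v : Fin n → B) : Prop :=
  ∀ b : B, (∑ i, v i * E (star (v i) * b)) = b ∧ (∑ i, E (b * v i) * star (v i)) = b

/-- If `{(vᵢ, vᵢ*)}` is a quasi-basis for `E : B → A` and the projection
`p ∈ A` satisfies `∑ⱼ yⱼ p yⱼ* = 1` with `yⱼ ∈ A`, then
`{(p vᵢ yⱼ p, p yⱼ* vᵢ* p)}` is a quasi-basis for `F_p = E|_{pBp} : pBp → pAp`. -/
theorem stmt_6 {B : Type*} [CStarAlgebra B] (A : StarSubalgebra ℂ B) (E : B →ₗ[ℂ] B)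
    (hE : IsCondExp A E) (hf : IsFaithful E) {n : ℕ} (v : Fin n → B)
    (hv : IsQuasiBasis E v)
    (p : B) (hpA : p ∈ A) (hp : p * p = p) (hps : star p = p)
    {m : ℕ} (y : Fin m → B) (hyA : ∀ j, y j ∈ A)
    (hy : ∑ j, y j * p * star (y j) = 1) :
    ∀ b : B, p * b * p = b →
      (∑ i, ∑ j, (p * v i * y j * p) * E ((p * star (y j) * star (v i) * p) * b) = b) ∧
      (∑ i, ∑ j, E (b * (p * v i * y j * p)) * (p * star (y j) * star (v i) * p) = b) := by

  obtain ⟨hmem, hfix, hbimod, hstar, hpos⟩ := hE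
  intro b hb
  have hpb : p * b = b := by
    nth_rewrite 1 [← hb]
    rw [← mul_assoc, ← mul_assoc, hp, hb]
  have hbp : b * p = b := by
    nth_rewrite 1 [← hb]
    rw [mul_assoc, hp, hb]
  have hpp : ∀ x : B, p * (p * x) = p * x := fun x => by rw [← mul_assoc, hp]
  have hy' : ∑ j, y j * (p * star (y j)) = 1 := by simpa only [mul_assoc] using hy
  constructor
  · have hEterm : ∀ i j, E (p * star (y j) * star (v i) * p * b)
        = p * star (y j) * E (star (v i) * b) := by
      intro i j
      have h1 : p * star (y j) * star (v i) * p * b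
          = (p * star (y j)) * (star (v i) * b) * 1 := by
        simp only [mul_one, mul_assoc, hpb]
      rw [h1, hbimod _ (mul_mem hpA (star_mem (hyA j))) _ _ (one_mem A), mul_one]
    have step : ∀ i j, (p * v i * y j * p) * E (p * star (y j) * star (v i) * p * b)
        = (p * v i) * ((y j * p * star (y j)) * E (star (v i) * b)) := by
      intro i j
      rw [hEterm i j]
      simp only [mul_assoc, hpp]
    calc ∑ i, ∑ j, (p * v i * y j * p) * E ((p * star (y j) * star (v i) * p) * b)
        = ∑ i, (p * v i) * ((∑ j, y j * p * star (y j)) * E (star (v i) * b)) := by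
          refine Finset.sum_congr rfl fun i _ => ?_
          rw [Finset.sum_mul, Finset.mul_sum]
          exact Finset.sum_congr rfl fun j _ => step i j
      _ = ∑ i, p * (v i * E (star (v i) * b)) := by
          simp only [mul_assoc, hy', one_mul]
      _ = p * ∑ i, v i * E (star (v i) * b) := by rw [Finset.mul_sum]
      _ = b := by rw [(hv b).1, hpb]
  · have hEterm : ∀ i j, E (b * (p * v i * y j * p))
        = E (b * v i) * (y j * p) := by
      intro i j
      have h1 : b * (p * v i * y j * p)
          = 1 * (b * v i) * (y j * p) := by
        simp only [one_mul]
        rw [show p * v i * y j * p = p * (v i * (y j * p)) by simp only [mul_assoc],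
          ← mul_assoc, hbp, mul_assoc]
      rw [h1, hbimod _ (one_mem A) _ _ (mul_mem (hyA j) hpA), one_mul]
    have step : ∀ i j, E (b * (p * v i * y j * p)) * (p * star (y j) * star (v i) * p)
        = (E (b * v i)) * ((y j * p * star (y j)) * (star (v i) * p)) := by
      intro i j
      rw [hEterm i j]
      simp only [mul_assoc, hpp]
    calc ∑ i, ∑ j, E (b * (p * v i * y j * p)) * (p * star (y j) * star (v i) * p)
        = ∑ i, (E (b * v i)) * ((∑ j, y j * p * star (y j)) * (star (v i) * p)) := by
          refine Finset.sum_congr rfl fun i _ => ?_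
          rw [Finset.sum_mul, Finset.mul_sum]
          exact Finset.sum_congr rfl fun j _ => step i j
      _ = ∑ i, (E (b * v i) * star (v i)) * p := by
          simp only [mul_assoc, hy', one_mul]
      _ = (∑ i, E (b * v i) * star (v i)) * p := by rw [Finset.sum_mul]
      _ = b := by rw [(hv b).2, hbp]
end

section
/- Let 1 ∈ A ⊂ B be an inclusion of unital C*-algebras and E : B → A a faithful conditional expectation of index-finite type. If A is simple, then for every non-zero projection p ∈ A the conditional expectation F_p = E|_{pBp} : pBp → pAp is of index-finite type. -/
/-- A C*-algebra is simple: it has no nontrivial closed two-sided ideals. -/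
def IsSimpleCStar (R : Type*) [NonUnitalNonAssocRing R] [TopologicalSpace R] : Prop :=
  ∀ I : TwoSidedIdeal R, IsClosed (I : Set R) → I = ⊥ ∨ I = ⊤

theorem TwoSidedIdeal.exists_sum_mul_mul_eq_of_mem_span_singleton {R : Type*} [Ring R]
    {q t : R} (ht : t ∈ TwoSidedIdeal.span {q}) :
    ∃ (n : ℕ) (a b : Fin n → R), ∑ j, a j * q * b j = t := by
  let I : TwoSidedIdeal R := .mk' {t | ∃ (n : ℕ) (a b : Fin n → R), ∑ j, a j * q * b j = t}
    ⟨0, 0, 0, by simp⟩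
    (by
      rintro _ _ ⟨n, a, b, rfl⟩ ⟨m, c, d, rfl⟩
      exact ⟨n + m, Fin.append a c, Fin.append b d, by simp [Fin.sum_univ_add]⟩)
    (by
      rintro _ ⟨n, a, b, rfl⟩
      exact ⟨n, -a, b, by simp⟩)
    (by
      rintro x _ ⟨n, a, b, rfl⟩
      exact ⟨n, fun j => x * a j, b, by simp [Finset.mul_sum, mul_assoc]⟩)
    (by
      rintro _ y ⟨n, a, b, rfl⟩
      exact ⟨n, a, fun j => b j * y, by simp [Finset.sum_mul, mul_assoc]⟩)
  have hqI : {q} ⊆ (I : Set R) := by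
    rintro _ rfl
    exact ⟨1, 1, 1, by simp⟩
  exact (TwoSidedIdeal.mem_mk' _ _ _ _ _ _ t).mp (TwoSidedIdeal.span_le.mpr hqI ht)

protected def TwoSidedIdeal.closure {R : Type*} [Ring R] [TopologicalSpace R]
    [IsTopologicalRing R] (I : TwoSidedIdeal R) : TwoSidedIdeal R :=
  .mk' (closure I) (subset_closure I.zero_mem)
    (fun hx hy => map_mem_closure₂ continuous_add hx hy fun _ ha _ hb => I.add_mem ha hb)
    (fun hx => map_mem_closure continuous_neg hx fun _ ha => I.neg_mem ha)
    (fun {x _} hy =>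
      map_mem_closure (continuous_const_mul x) hy fun _ ha => I.mul_mem_left x _ ha)
    (fun {_ y} hx =>
      map_mem_closure (f := (· * y)) (continuous_mul_const y) hx fun _ ha => I.mul_mem_right _ y ha)

theorem TwoSidedIdeal.coe_closure {R : Type*} [Ring R] [TopologicalSpace R]
    [IsTopologicalRing R] (I : TwoSidedIdeal R) : (I.closure : Set R) = closure I := by
  rw [TwoSidedIdeal.closure, TwoSidedIdeal.coe_mk']

theorem IsSimpleCStar.one_mem_span_singleton {R : Type*} [NormedRing R] [CompleteSpace R]
    (hR : IsSimpleCStar R) {q : R} (hq : q ≠ 0) : (1 : R) ∈ TwoSidedIdeal.span {q} := by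
  set I := TwoSidedIdeal.span {q}
  have hI : I.closure = ⊤ := by
    refine (hR I.closure (by rw [I.coe_closure]; exact isClosed_closure)).resolve_left ?_
    intro h
    have hq' : q ∈ I.closure := by
      rw [← SetLike.mem_coe, I.coe_closure]
      exact subset_closure (TwoSidedIdeal.subset_span rfl)
    exact hq (by simpa [h] using hq')
  have h1 : (1 : R) ∈ closure (I : Set R) := by
    rw [← I.coe_closure, hI]
    trivial
  obtain ⟨u, hu, huI⟩ := mem_closure_iff.mp h1 _ Units.isOpen isUnit_one
  obtain ⟨u, rfl⟩ := hu
  simpa using I.mul_mem_left (↑u⁻¹) _ huI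

theorem add_star_mul_mul_star_add_star {R : Type*} [Ring R] [StarRing R] {q : R}
    (hq : IsSelfAdjoint q) (x y : R) :
    (x + star y) * q * star (x + star y)
      = x * q * y + star (x * q * y) + (x * q * star x + star y * q * y) := by
  simp only [star_add, star_mul, star_star, hq.star_eq]
  noncomm_ring

section CStar

variable {𝒜 : Type*} [CStarAlgebra 𝒜] [PartialOrder 𝒜] [StarOrderedRing 𝒜]

theorem exists_sum_mul_mul_star_eq_one_of_sum_mul_mul_eq_one {q : 𝒜} (hq : 0 ≤ q) {n : ℕ}
    {x y : Fin n → 𝒜} (hxy : ∑ j, x j * q * y j = 1) :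
    ∃ z : Fin n → 𝒜, ∑ j, z j * q * star (z j) = 1 := by
  set e : Fin n → 𝒜 := fun j => x j + star (y j)
  have hK : ∑ j, e j * q * star (e j)
      = 1 + (1 + ∑ j, (x j * q * star (x j) + star (y j) * q * y j)) := by
    simp only [e, add_star_mul_mul_star_add_star (IsSelfAdjoint.of_nonneg hq),
      Finset.sum_add_distrib, ← star_sum, hxy, star_one, add_assoc]
  have hKpos : IsStrictlyPositive (∑ j, e j * q * star (e j)) := by
    rw [hK]
    refine isStrictlyPositive_one.add_nonneg (add_nonneg zero_le_one (Finset.sum_nonneg ?_))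
    exact fun j _ => add_nonneg (star_right_conjugate_nonneg hq _) (star_left_conjugate_nonneg hq _)
  obtain ⟨_, ⟨u, rfl⟩, hKu⟩ := CStarAlgebra.isStrictlyPositive_iff_eq_mul_star_self.mp hKpos
  refine ⟨fun j => ↑u⁻¹ * e j, ?_⟩
  calc ∑ j, ↑u⁻¹ * e j * q * star (↑u⁻¹ * e j)
      = ↑u⁻¹ * (∑ j, e j * q * star (e j)) * star (↑u⁻¹ : 𝒜) := by
        simp only [Finset.mul_sum, Finset.sum_mul, star_mul, mul_assoc]
    _ = 1 := by rw [hKu, ← mul_assoc, Units.inv_mul, one_mul, ← star_mul, Units.inv_mul, star_one]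

theorem IsSimpleCStar.exists_sum_mul_mul_star_eq_one (h𝒜 : IsSimpleCStar 𝒜) {q : 𝒜}
    (hq : 0 ≤ q) (hq0 : q ≠ 0) :
    ∃ (n : ℕ) (z : Fin n → 𝒜), ∑ j, z j * q * star (z j) = 1 := by
  obtain ⟨n, x, y, hxy⟩ :=
    TwoSidedIdeal.exists_sum_mul_mul_eq_of_mem_span_singleton (h𝒜.one_mem_span_singleton hq0)
  exact ⟨n, exists_sum_mul_mul_star_eq_one_of_sum_mul_mul_eq_one hq hxy⟩

end CStar

namespace IsCondExp

variable {B : Type*} [CStarAlgebra B] {A : StarSubalgebra ℂ B} {E : B →ₗ[ℂ] B}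

theorem continuous (hE : IsCondExp A E) : Continuous E := by
  let _ := CStarAlgebra.spectralOrder B
  have _ := CStarAlgebra.spectralOrderedRing B
  have hpos : ∀ b : B, 0 ≤ b → 0 ≤ E b := by
    intro b hb
    obtain ⟨x, rfl⟩ := CStarAlgebra.nonneg_iff_eq_star_mul_self.mp hb
    obtain ⟨y, hy⟩ := hE.2.2.2.2 x
    exact hy ▸ star_mul_self_nonneg y
  exact map_continuous (PositiveLinearMap.mk₀ E hpos)

theorem isClosed (hE : IsCondExp A E) : IsClosed (A : Set B) := by
  have hfix : (A : Set B) = {b | E b = b} :=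
    Set.ext fun b => ⟨hE.2.1 b, fun hb => hb ▸ hE.1 b⟩
  exact hfix ▸ isClosed_eq hE.continuous continuous_id

end IsCondExp

namespace IsQuasiBasis

variable {B : Type*} [CStarAlgebra B] {A : StarSubalgebra ℂ B} {E : B →ₗ[ℂ] B}
  {n M : ℕ} {v : Fin n → B} {p : B} {Z : Fin M → B}

theorem sum_corner_mul_condExp (hv : IsQuasiBasis E v) (hE : IsCondExp A E) (hpA : p ∈ A)
    (hp : p * p = p) (hps : star p = p) (hZA : ∀ k, Z k ∈ A) (hZ : ∑ k, Z k * p * star (Z k) = 1)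
    {b : B} (hb : p * b = b) :
    ∑ x : Fin n × Fin M, p * v x.1 * Z x.2 * p * E (star (p * v x.1 * Z x.2 * p) * b) = b := by
  have hterm : ∀ i k, p * v i * Z k * p * E (star (p * v i * Z k * p) * b)
      = p * v i * (Z k * p * star (Z k)) * E (star (v i) * b) := by
    intro i k
    have hpp : ∀ x, p * (p * x) = p * x := fun x => by rw [← mul_assoc, hp]
    have hmod : star (p * v i * Z k * p) * b = p * star (Z k) * (star (v i) * b) * 1 := by
      simp only [star_mul, hps, mul_assoc, hb, mul_one]
    rw [hmod, hE.2.2.1 _ (mul_mem hpA (star_mem (hZA k))) _ _ (one_mem A)]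
    simp only [mul_assoc, mul_one, hpp]
  calc _ = ∑ i, ∑ k, p * v i * (Z k * p * star (Z k)) * E (star (v i) * b) := by
        simp only [Fintype.sum_prod_type, hterm]
    _ = ∑ i, p * v i * E (star (v i) * b) := Finset.sum_congr rfl fun i _ => by
        rw [← Finset.sum_mul, ← Finset.mul_sum, hZ, mul_one]
    _ = p * ∑ i, v i * E (star (v i) * b) := by simp only [Finset.mul_sum, mul_assoc]
    _ = b := by rw [(hv b).1, hb]

theorem sum_condExp_mul_star_corner (hv : IsQuasiBasis E v) (hE : IsCondExp A E) (hpA : p ∈ A)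
    (hp : p * p = p) (hps : star p = p) (hZA : ∀ k, Z k ∈ A) (hZ : ∑ k, Z k * p * star (Z k) = 1)
    {b : B} (hb : b * p = b) :
    ∑ x : Fin n × Fin M, E (b * (p * v x.1 * Z x.2 * p)) * star (p * v x.1 * Z x.2 * p) = b := by
  have hb' : p * star b = star b := by rw [← hps, ← star_mul, hb]
  apply star_injective
  simpa only [star_sum, star_mul, star_star, ← hE.2.2.2.1] using
    hv.sum_corner_mul_condExp hE hpA hp hps hZA hZ hb'

theorem exists_corner_quasiBasis (hv : IsQuasiBasis E v) (hE : IsCondExp A E) (hpA : p ∈ A)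
    (hp : p * p = p) (hps : star p = p) (hZA : ∀ k, Z k ∈ A)
    (hZ : ∑ k, Z k * p * star (Z k) = 1) :
    ∃ (m : ℕ) (w : Fin m → B), (∀ i, p * w i * p = w i) ∧
      ∀ b : B, p * b * p = b →
        (∑ i, w i * E (star (w i) * b) = b) ∧ (∑ i, E (b * w i) * star (w i) = b) := by
  let e : Fin (n * M) ≃ Fin n × Fin M := finProdFinEquiv.symm
  refine ⟨n * M, fun j => p * v (e j).1 * Z (e j).2 * p, fun j => ?_, fun b hb => ⟨?_, ?_⟩⟩
  · simp only [← mul_assoc, hp]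
    rw [mul_assoc _ p p, hp]
  · rw [e.sum_comp (fun x => p * v x.1 * Z x.2 * p * E (star (p * v x.1 * Z x.2 * p) * b))]
    exact hv.sum_corner_mul_condExp hE hpA hp hps hZA hZ
      (by rw [← hb, ← mul_assoc, ← mul_assoc, hp])
  · rw [e.sum_comp (fun x => E (b * (p * v x.1 * Z x.2 * p)) * star (p * v x.1 * Z x.2 * p))]
    exact hv.sum_condExp_mul_star_corner hE hpA hp hps hZA hZ
      (by rw [← hb, mul_assoc, hp])

end IsQuasiBasis

theorem stmt_8_general {B : Type*} [CStarAlgebra B] (A : StarSubalgebra ℂ B) (E : B →ₗ[ℂ] B)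
    (hE : IsCondExp A E)
    (hfin : ∃ (n : ℕ) (v : Fin n → B), IsQuasiBasis E v)
    (hA : IsSimpleCStar A)
    (p : B) (hpA : p ∈ A) (hp : p * p = p) (hps : star p = p) (hp0 : p ≠ 0) :
    ∃ (m : ℕ) (w : Fin m → B), (∀ i, p * w i * p = w i) ∧
      ∀ b : B, p * b * p = b →
        (∑ i, w i * E (star (w i) * b) = b) ∧ (∑ i, E (b * w i) * star (w i) = b) := by
  obtain ⟨n, v, hv⟩ := hfin
  -- the instance `StarSubalgebra.cstarAlgebra` makes `A` a C*-algebra once it is closed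
  have _ : IsClosed (A : Set B) := hE.isClosed
  let _ := CStarAlgebra.spectralOrder A
  have _ := CStarAlgebra.spectralOrderedRing A
  have hq : (0 : A) ≤ ⟨p, hpA⟩ := IsStarProjection.nonneg ⟨Subtype.ext hp, Subtype.ext hps⟩
  obtain ⟨M, z, hz⟩ := hA.exists_sum_mul_mul_star_eq_one hq (Subtype.coe_ne_coe.mp hp0)
  refine hv.exists_corner_quasiBasis hE hpA hp hps (Z := fun k => z k) (fun k => (z k).2) ?_
  simpa using congrArg Subtype.val hz

/-- If `E : B → A` is a faithful conditional expectation of index-finite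
type and `A` is simple, then for every non-zero projection `p ∈ A` the restriction
`F_p = E|_{pBp} : pBp → pAp` is of index-finite type, i.e. admits a quasi-basis
consisting of elements of the corner `pBp`. -/
theorem stmt_8 {B : Type*} [CStarAlgebra B] (A : StarSubalgebra ℂ B) (E : B →ₗ[ℂ] B)
    (hE : IsCondExp A E) (hf : IsFaithful E)
    (hfin : ∃ (n : ℕ) (v : Fin n → B), IsQuasiBasis E v)
    (hA : IsSimpleCStar A)
    (p : B) (hpA : p ∈ A) (hp : p * p = p) (hps : star p = p) (hp0 : p ≠ 0) :
    ∃ (m : ℕ) (w : Fin m → B), (∀ i, p * w i * p = w i) ∧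
      ∀ b : B, p * b * p = b →
        (∑ i, w i * E (star (w i) * b) = b) ∧ (∑ i, E (b * w i) * star (w i) = b) :=
  stmt_8_general A E hE hfin hA p hpA hp hps hp0
end

section
/- Let A be a simple unital C*-algebra, α an action of ℤ/2ℤ on A, B = A ⋊_α ℤ/2ℤ, and p ∈ A a projection with [p] ≠ [α(p)] in K_0(A). Then the inclusion pAp ⊂ pBp cannot be expressed as pAp ⊂ (pAp) ⋊_β ℤ/2ℤ for any action β of ℤ/2ℤ on pAp (via an isomorphism of pBp with the crossed product restricting to the identity on pAp). -/
/-- The projection `p` padded with `k` copies of `1` on the diagonal. -/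
def padProj {R : Type*} [Ring R] (p : R) (k : ℕ) :
    Matrix (Fin (k + 1)) (Fin (k + 1)) R :=
  Matrix.diagonal (fun i => if i = 0 then p else 1)

/-- Two projections `p`, `q` of a *-ring define the same class in `K₀`:
they become Murray–von Neumann equivalent after adding `k` copies of `1`. -/
def K0Eq {R : Type*} [Ring R] [StarRing R] (p q : R) : Prop :=
  ∃ (k : ℕ) (w : Matrix (Fin (k + 1)) (Fin (k + 1)) R),
    w * star w = padProj p k ∧ star w * w = padProj q k

/-!
Write `w = h + a u` with `h a : A`. Comparing coefficients in `w⋆ = w`, `w² = p` and `p w p = w`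
gives `a⋆ = α a`, `a a⋆ = p - h²` and `h ∈ pAp`. For `x ∈ pAp` and `y = w x w ∈ pAp` we have
`w x = y w` and `w y = x w`, hence `h x = y h` and `h y = x h`, so `h²` commutes with `pAp`.
In a simple C⋆-algebra a positive element of `pAp` commuting with `pAp` is a multiple `c p`,
so `a a⋆ = c p` and `a⋆ a = α (a a⋆) = c α(p)`: if `c ≠ 0`, `c^{-1/2} a` is a partial isometry
from `α(p)` to `p`; if `c = 0`, then `a = 0`, `w ∈ pAp`, and uniqueness of the decomposition of
`w` forces `p = 0`.
-/

section Simple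

variable {R : Type*} [Ring R] [TopologicalSpace R] [ContinuousMul R] [T1Space R]

lemma IsSimpleCStar.eq_zero_or_eq_zero_of_mul_mul_eq_zero (hR : IsSimpleCStar R) {a b : R}
    (h : ∀ x, a * x * b = 0) : a = 0 ∨ b = 0 := by
  let I : TwoSidedIdeal R := .mk' {c | ∀ x, a * x * c = 0} (by simp)
    (fun hc hd x => by rw [mul_add, hc x, hd x, add_zero])
    (fun hc x => by rw [mul_neg, hc x, neg_zero])
    (fun {r _} hc x => by rw [← mul_assoc, mul_assoc a, hc])
    (fun {_ r} hc x => by rw [← mul_assoc, hc, zero_mul])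
  have hI : IsClosed (I : Set R) := by
    rw [TwoSidedIdeal.coe_mk', Set.ofPred_forall]
    exact isClosed_iInter fun x => isClosed_singleton.preimage (continuous_const_mul (a * x))
  rcases hR I hI with hbot | htop
  · have hb : b ∈ I := by simpa [I] using h
    exact .inr (by rwa [hbot, TwoSidedIdeal.mem_bot] at hb)
  · have h1 : (1 : R) ∈ I := htop ▸ TwoSidedIdeal.mem_top R
    exact .inl (by simpa using h1 1)

lemma IsSimpleCStar.eq_zero_of_commute_corner (hR : IsSimpleCStar R) {p a b : R}
    (hap : a * p = a) (hpb : p * b = b) (hcomm : ∀ x, Commute a (p * x * p))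
    (hab : a * b = 0) (hb : b ≠ 0) : a = 0 := by
  refine (hR.eq_zero_or_eq_zero_of_mul_mul_eq_zero fun x => ?_).resolve_right hb
  calc a * x * b
      = a * (p * x * p) * b := by
        conv_lhs => rw [← hpb, ← hap]
        simp only [mul_assoc]
    _ = p * x * p * (a * b) := by rw [(hcomm x).eq, mul_assoc]
    _ = 0 := by rw [hab, mul_zero]

end Simple

section FunctionalCalculus

variable {A : Type*} [CStarAlgebra A]

lemma eq_div_max_mul_of_forall_le {f : ℝ → ℝ} {c : ℝ} (hc : 0 < c) (hf : ∀ x ≤ c, f x = 0)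
    (x : ℝ) : f x = f x / max x c * x := by
  rcases le_or_gt x c with hx | hx
  · simp [hf x hx]
  · rw [max_eq_left hx.le, div_mul_cancel₀ _ (hc.trans hx).ne']

lemma cfc_eq_cfc_div_max_mul {z : A} (hz : IsSelfAdjoint z) {f : ℝ → ℝ} (hf : Continuous f)
    {c : ℝ} (hc : 0 < c) (hf0 : ∀ x ≤ c, f x = 0) :
    cfc f z = cfc (fun x => f x / max x c) z * z := by
  have hg : Continuous fun x => f x / max x c :=
    hf.div (continuous_id.max continuous_const) fun x => (hc.trans_le (le_max_right x c)).ne'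
  calc cfc f z = cfc (fun x => f x / max x c * x) z :=
        cfc_congr fun x _ => eq_div_max_mul_of_forall_le hc hf0 x
    _ = cfc (fun x => f x / max x c) z * z := by
        rw [cfc_mul _ (fun x => x) z hg.continuousOn, cfc_id' ℝ z]

lemma cfc_mul_eq_self {z p : A} (hz : IsSelfAdjoint z) (hzp : z * p = z) {f : ℝ → ℝ}
    (hf : Continuous f) {c : ℝ} (hc : 0 < c) (hf0 : ∀ x ≤ c, f x = 0) :
    cfc f z * p = cfc f z := by
  rw [cfc_eq_cfc_div_max_mul hz hf hc hf0, mul_assoc, hzp]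

lemma mul_cfc_eq_self {z p : A} (hz : IsSelfAdjoint z) (hpz : p * z = z) {f : ℝ → ℝ}
    (hf : Continuous f) {c : ℝ} (hc : 0 < c) (hf0 : ∀ x ≤ c, f x = 0) :
    p * cfc f z = cfc f z := by
  rw [cfc_eq_cfc_div_max_mul hz hf hc hf0, ((Commute.refl z).cfc_real _).eq, ← mul_assoc, hpz]

variable [PartialOrder A] [StarOrderedRing A]

lemma norm_smul_sub_le_norm {p z : A} (hp : IsStarProjection p) (hz : 0 ≤ z)
    (hpz : p * z = z) (hzp : z * p = z) : ‖‖z‖ • p - z‖ ≤ ‖z‖ := by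
  have hconj : star p * (algebraMap ℝ A ‖z‖ - z) * p = ‖z‖ • p - z := by
    rw [hp.isSelfAdjoint.star_eq, mul_sub, sub_mul, hpz, hzp, ← Algebra.commutes, mul_assoc,
      hp.isIdempotentElem.eq, Algebra.smul_def]
  have hnonneg : 0 ≤ ‖z‖ • p - z := hconj ▸ star_left_conjugate_nonneg
    (sub_nonneg.2 hz.isSelfAdjoint.le_algebraMap_norm_self) p
  calc ‖‖z‖ • p - z‖ ≤ ‖‖z‖ • p‖ := CStarAlgebra.norm_le_norm_of_nonneg_of_le hnonneg
        (sub_le_self _ hz)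
    _ ≤ ‖z‖ * 1 := by rw [norm_smul, norm_norm]; gcongr; exact IsStarProjection.norm_le p hp
    _ = ‖z‖ := mul_one _

lemma norm_cfc_mul_smul_sub_le {z p : A} (hz : 0 ≤ z) (hzp : z * p = z) {k : ℝ → ℝ}
    (hk : Continuous k) {c : ℝ} (hc : 0 < c) (hcz : c ≤ ‖z‖) (hk0 : ∀ x ≤ c, k x = 0)
    (hk01 : ∀ x, k x ∈ Set.Icc 0 1) :
    ‖cfc k z * (‖z‖ • p - z)‖ ≤ ‖z‖ - c := by
  have hcfc : cfc k z * (‖z‖ • p - z) = cfc (fun x => k x * (‖z‖ - x)) z := by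
    rw [cfc_mul k (fun x => ‖z‖ - x) z hk.continuousOn, cfc_sub (fun _ => ‖z‖) (fun x => x) z,
      cfc_const ‖z‖ z, cfc_id' ℝ z, mul_sub, mul_sub, mul_smul_comm,
      cfc_mul_eq_self hz.isSelfAdjoint hzp hk hc hk0, Algebra.algebraMap_eq_smul_one,
      mul_smul_comm, mul_one]
  rw [hcfc]
  refine norm_cfc_le (sub_nonneg.2 hcz) fun x hx => ?_
  have hxz : x ≤ ‖z‖ := by
    cases subsingleton_or_nontrivial A
    · simp [spectrum.of_subsingleton] at hx
    · exact (Real.le_norm_self x).trans (spectrum.norm_le_norm_of_mem hx)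
  rw [Real.norm_eq_abs, abs_of_nonneg (mul_nonneg (hk01 x).1 (sub_nonneg.2 hxz))]
  rcases le_or_gt x c with hxc | hxc
  · rw [hk0 x hxc, zero_mul]; linarith
  · have := mul_le_of_le_one_left (sub_nonneg.2 hxz) (hk01 x).2
    linarith

theorem IsSimpleCStar.eq_norm_smul_of_commute_corner (hA : IsSimpleCStar A) {p z : A}
    (hp : IsStarProjection p) (hz : 0 ≤ z) (hpz : p * z = z) (hzp : z * p = z)
    (hcomm : ∀ x, Commute z (p * x * p)) : z = ‖z‖ • p := by
  -- Otherwise `y = ‖z‖ p - z ≠ 0`. Then `a = f(z)`, supported where `z` is close to `‖z‖`, and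
  -- `b = (1 - k(z)) y`, supported where `z` is at least `‖y‖ / 4` below `‖z‖`, are nonzero
  -- elements of `pAp` with `a b = 0` and `a` central in `pAp`, contradicting simplicity.
  by_contra hne
  set t := ‖z‖
  set y := t • p - z
  set s := ‖y‖
  have hs : 0 < s := norm_pos_iff.2 (sub_ne_zero.2 (Ne.symm hne))
  have hst : s ≤ t := norm_smul_sub_le_norm hp hz hpz hzp
  have : Nontrivial A := ⟨⟨y, 0, norm_pos_iff.1 hs⟩⟩
  obtain ⟨f, hf0, hft, -⟩ := exists_continuous_zero_one_of_isClosed (isClosed_Iic (a := t - s / 4))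
    (isClosed_singleton (x := t)) (Set.disjoint_singleton_right.2 (by simp; linarith))
  obtain ⟨k, hk0, hk1, hk01⟩ := exists_continuous_zero_one_of_isClosed
    (isClosed_Iic (a := t - s / 2)) (isClosed_Ici (a := t - s / 4))
    (Set.Iic_disjoint_Ici.2 (by linarith))
  set a := cfc f z
  set b := y - cfc k z * y
  have ha : a ≠ 0 := by
    have := norm_apply_le_norm_cfc f z (CStarAlgebra.norm_mem_spectrum_of_nonneg hz)
    rw [hft rfl, Pi.one_apply, norm_one] at this
    exact norm_pos_iff.1 (one_pos.trans_le this)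
  have hb : b ≠ 0 := by
    intro hb
    have := norm_cfc_mul_smul_sub_le hz hzp k.continuous (by linarith) (by linarith)
      (fun x hx => hk0 hx) hk01
    rw [← sub_eq_zero.1 hb] at this
    linarith
  have hak : a * cfc k z = a := by
    rw [← cfc_mul f k z]
    refine cfc_congr fun x _ => ?_
    rcases le_or_gt x (t - s / 4) with hx | hx
    · simp [hf0 hx]
    · simp [hk1 hx.le]
  have hab : a * b = 0 := by rw [mul_sub, ← mul_assoc, hak, sub_self]
  have hap : a * p = a := cfc_mul_eq_self hz.isSelfAdjoint hzp f.continuous (by linarith)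
    (fun x hx => hf0 hx)
  have hpb : p * b = b := by
    have hpy : p * y = y := by rw [mul_sub, mul_smul_comm, hp.isIdempotentElem.eq, hpz]
    rw [mul_sub, ← mul_assoc, mul_cfc_eq_self hz.isSelfAdjoint hpz k.continuous (c := t - s / 2)
      (by linarith) (fun x hx => hk0 hx), hpy]
  exact ha (hA.eq_zero_of_commute_corner hap hpb (fun x => (hcomm x).cfc_real f) hab hb)

theorem IsSimpleCStar.sub_mul_self_eq_norm_smul (hA : IsSimpleCStar A) {p h : A}
    (hp : IsStarProjection p)
    (hph : p * h = h) (hhp : h * p = h) (hcomm : ∀ x, Commute (h * h) (p * x * p))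
    (hle : 0 ≤ p - h * h) : p - h * h = ‖p - h * h‖ • p := by
  have hpcomm (x : A) : Commute p (p * x * p) := by
    simp only [Commute, SemiconjBy, ← mul_assoc, hp.isIdempotentElem.eq, mul_assoc _ p p]
  refine hA.eq_norm_smul_of_commute_corner hp hle ?_ ?_ fun x => (hpcomm x).sub_left (hcomm x)
  · rw [mul_sub, hp.isIdempotentElem.eq, ← mul_assoc, hph]
  · rw [sub_mul, hp.isIdempotentElem.eq, mul_assoc, hhp]

end FunctionalCalculus

lemma mul_eq_conj_mul_and_mul_conj_eq {R : Type*} [Semigroup R] {w e x : R} (hww : w * w = e)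
    (hex : e * x = x) (hxe : x * e = x) : w * x = w * x * w * w ∧ w * (w * x * w) = x * w := by
  constructor
  · rw [mul_assoc _ w w, hww, mul_assoc, hxe]
  · rw [← mul_assoc, ← mul_assoc, hww, hex]

structure IsZ2CrossedProduct {A B : Type*} [Ring A] [StarRing A] [Algebra ℂ A] [Ring B]
    [StarRing B] [Algebra ℂ B] (ι : A →⋆ₐ[ℂ] B) (α : A ≃⋆ₐ[ℂ] A) (u : B) : Prop where
  star_self : star u = u
  mul_self : u * u = 1
  conj : ∀ a, u * ι a * u = ι (α a)
  existsUnique : ∀ b, ∃! c : A × A, b = ι c.1 + ι c.2 * u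

namespace IsZ2CrossedProduct

variable {A B : Type*} [Ring A] [StarRing A] [Algebra ℂ A] [Ring B] [StarRing B] [Algebra ℂ B]
  {ι : A →⋆ₐ[ℂ] B} {α : A ≃⋆ₐ[ℂ] A} {u : B}

lemma add_mul_eq_iff (hB : IsZ2CrossedProduct ι α u) {x y x' y' : A} :
    ι x + ι y * u = ι x' + ι y' * u ↔ x = x' ∧ y = y' := by
  refine ⟨fun h => ?_, fun ⟨hx, hy⟩ => hx ▸ hy ▸ rfl⟩
  exact Prod.ext_iff.1 <|
    (hB.existsUnique (ι x' + ι y' * u)).unique (y₁ := (x, y)) (y₂ := (x', y')) h.symm rfl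

lemma injective (hB : IsZ2CrossedProduct ι α u) : Function.Injective ι := fun x y h =>
  (hB.add_mul_eq_iff (y := 0) (y' := 0)).1 (by rw [h]) |>.1

lemma mul_ι (hB : IsZ2CrossedProduct ι α u) (a : A) : u * ι a = ι (α a) * u := by
  rw [← hB.conj, mul_assoc _ u u, hB.mul_self, mul_one]

lemma apply_apply (hB : IsZ2CrossedProduct ι α u) (a : A) : α (α a) = a :=
  hB.injective <| by rw [← hB.conj, ← hB.conj, ← mul_assoc, ← mul_assoc, hB.mul_self,
    mul_assoc, mul_assoc, hB.mul_self, one_mul, mul_one]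

lemma star_add_mul (hB : IsZ2CrossedProduct ι α u) (x y : A) :
    star (ι x + ι y * u) = ι (star x) + ι (α (star y)) * u := by
  rw [star_add, star_mul, hB.star_self, ← map_star, ← map_star, hB.mul_ι]

lemma add_mul_mul_add_mul (hB : IsZ2CrossedProduct ι α u) (x y x' y' : A) :
    (ι x + ι y * u) * (ι x' + ι y' * u) = ι (x * x' + y * α y') + ι (x * y' + y * α x') * u := by
  have e1 : ι y * u * ι x' = ι (y * α x') * u := by
    rw [mul_assoc, hB.mul_ι, ← mul_assoc, ← map_mul]
  have e2 : ι y * u * (ι y' * u) = ι (y * α y') := by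
    rw [mul_assoc, ← mul_assoc u, hB.mul_ι, mul_assoc, hB.mul_self, mul_one, ← map_mul]
  rw [add_mul, mul_add, mul_add, ← map_mul, e1, e2, ← mul_assoc, ← map_mul, map_add, map_add,
    add_mul]
  abel

lemma mul_eq_of_add_mul_mul_eq (hB : IsZ2CrossedProduct ι α u) {h a x y : A}
    (H : (ι h + ι a * u) * ι x = ι y * (ι h + ι a * u)) : h * x = y * h := by
  rw [add_mul, mul_add, mul_assoc, hB.mul_ι, ← mul_assoc, ← mul_assoc, ← map_mul, ← map_mul,
    ← map_mul, ← map_mul] at H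
  exact (hB.add_mul_eq_iff.1 H).1

lemma star_eq_of_star_add_mul_eq (hB : IsZ2CrossedProduct ι α u) {h a : A}
    (H : star (ι h + ι a * u) = ι h + ι a * u) : star a = α a := by
  have ha : α (star a) = a := (hB.add_mul_eq_iff.1 (hB.star_add_mul h a ▸ H)).2
  calc star a = α (α (star a)) := (hB.apply_apply _).symm
    _ = α a := by rw [ha]

lemma mul_self_add_mul_eq_of_sq_eq (hB : IsZ2CrossedProduct ι α u) {h a p : A}
    (H : (ι h + ι a * u) * (ι h + ι a * u) = ι p) : h * h + a * α a = p :=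
  (hB.add_mul_eq_iff (y' := 0)).1 (by
    rw [← hB.add_mul_mul_add_mul, H, map_zero, zero_mul, add_zero]) |>.1

lemma mul_eq_and_eq_mul_of_corner (hB : IsZ2CrossedProduct ι α u) {h a p : A}
    (hp : IsIdempotentElem p) (H : ι p * (ι h + ι a * u) * ι p = ι h + ι a * u) :
    p * h = h ∧ h * p = h := by
  have hexp : ι p * (ι h + ι a * u) * ι p = ι (p * h * p) + ι (p * a * α p) * u := by
    simp only [mul_add, add_mul, mul_assoc, hB.mul_ι, map_mul]
  have hphp : p * h * p = h := (hB.add_mul_eq_iff.1 (hexp ▸ H)).1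
  constructor
  · rw [← hphp, ← mul_assoc, ← mul_assoc, hp.eq]
  · rw [← hphp, mul_assoc, mul_assoc, hp.eq, ← mul_assoc]

lemma commute_mul_self_of_conj_mem_range (hB : IsZ2CrossedProduct ι α u) {h a p : A}
    (hp : IsIdempotentElem p) (hww : (ι h + ι a * u) * (ι h + ι a * u) = ι p)
    (hconj : ∀ x, ∃ y, (ι h + ι a * u) * ι (p * x * p) * (ι h + ι a * u) = ι y) (x : A) :
    Commute (h * h) (p * x * p) := by
  obtain ⟨y, hy⟩ := hconj x
  have hpx : ι p * ι (p * x * p) = ι (p * x * p) := by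
    rw [← map_mul, ← mul_assoc, ← mul_assoc, hp.eq]
  have hxp : ι (p * x * p) * ι p = ι (p * x * p) := by rw [← map_mul, mul_assoc, hp.eq]
  obtain ⟨h₁, h₂⟩ := mul_eq_conj_mul_and_mul_conj_eq hww hpx hxp
  rw [hy] at h₁ h₂
  have e₁ := hB.mul_eq_of_add_mul_mul_eq h₁
  have e₂ := hB.mul_eq_of_add_mul_mul_eq h₂
  calc h * h * (p * x * p) = h * y * h := by rw [mul_assoc, e₁, mul_assoc]
    _ = p * x * p * (h * h) := by rw [e₂, mul_assoc]

end IsZ2CrossedProduct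

lemma eq_zero_of_existsUnique_corner {A B F : Type*} [Ring A] [Ring B] [FunLike F A B]
    [RingHomClass F A B] (ι : F) {p h : A} (hp : IsIdempotentElem p) (hph : p * h = h)
    (hhp : h * p = h)
    (huniq : ∃! c : A × A, ι h = ι (p * c.1 * p) + ι (p * c.2 * p) * ι h) : p = 0 := by
  have := huniq.unique (y₁ := (h, 0)) (y₂ := (0, p)) (by simp [hph, hhp])
    (by simp [hp.eq, ← map_mul, hph])
  exact (Prod.ext_iff.1 this).2.symm

lemma K0Eq.of_mul_star {R : Type*} [Ring R] [StarRing R] {p q v : R}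
    (hp : v * star v = p) (hq : star v * v = q) : K0Eq p q := by
  refine ⟨0, Matrix.of fun _ _ => v, ?_, ?_⟩ <;>
  · ext i j
    fin_cases i; fin_cases j
    simp [padProj, Matrix.mul_apply, Matrix.star_eq_conjTranspose, hp, hq]

lemma K0Eq.of_mul_star_eq_smul {R : Type*} [Ring R] [StarRing R] [Module ℝ R] [StarModule ℝ R]
    [SMulCommClass ℝ R R] [IsScalarTower ℝ R R] {p q v : R} {c : ℝ} (hc : 0 < c)
    (hp : v * star v = c • p) (hq : star v * v = c • q) : K0Eq p q := by
  have hsq : (Real.sqrt c)⁻¹ * (Real.sqrt c)⁻¹ * c = 1 := by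
    rw [← mul_inv, Real.mul_self_sqrt hc.le, inv_mul_cancel₀ hc.ne']
  refine K0Eq.of_mul_star (v := (Real.sqrt c)⁻¹ • v) ?_ ?_
  · rw [star_smul, star_trivial, smul_mul_smul_comm, hp, smul_smul, hsq, one_smul]
  · rw [star_smul, star_trivial, smul_mul_smul_comm, hq, smul_smul, hsq, one_smul]

theorem stmt_19_general {A B : Type*} [CStarAlgebra A] [CStarAlgebra B]
    (hA : IsSimpleCStar A)
    (ι : A →⋆ₐ[ℂ] B)
    (α : A ≃⋆ₐ[ℂ] A)
    (u : B) (hus : star u = u) (huu : u * u = 1)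
    (hcov : ∀ a : A, u * ι a * u = ι (α a))
    (hdecomp : ∀ b : B, ∃! c : A × A, b = ι c.1 + ι c.2 * u)
    (p : A) (hp : p * p = p) (hps : star p = p)
    (hK : ¬ K0Eq p (α p)) :
    ¬ ∃ w : B, star w = w ∧ w * w = ι p ∧ ι p * w * ι p = w ∧
      (∀ a : A, ∃ a' : A, w * ι (p * a * p) * w = ι (p * a' * p)) ∧
      (∀ b : B, ι p * b * ι p = b →
        ∃! c : A × A, b = ι (p * c.1 * p) + ι (p * c.2 * p) * w) := by
  rintro ⟨w, hws, hww, hpwp, hnorm, hcp⟩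
  apply hK
  let _ := CStarAlgebra.spectralOrder A
  let _ := CStarAlgebra.spectralOrderedRing A
  have hB : IsZ2CrossedProduct ι α u := ⟨hus, huu, hcov, hdecomp⟩
  obtain ⟨⟨h, a⟩, rfl, -⟩ := hdecomp w
  dsimp only at *
  have hstar : star a = α a := hB.star_eq_of_star_add_mul_eq hws
  obtain ⟨hph, hhp⟩ := hB.mul_eq_and_eq_mul_of_corner hp hpwp
  have hz : a * star a = p - h * h := by
    rw [hstar, ← hB.mul_self_add_mul_eq_of_sq_eq hww, add_sub_cancel_left]
  have hscalar : a * star a = ‖a * star a‖ • p := by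
    rw [hz]
    refine hA.sub_mul_self_eq_norm_smul ⟨hp, hps⟩ hph hhp ?_ (hz ▸ mul_star_self_nonneg a)
    exact hB.commute_mul_self_of_conj_mem_range hp hww fun x => (hnorm x).elim fun _ h => ⟨_, h⟩
  have hstar_mul : star a * a = ‖a * star a‖ • α p := by
    rw [← Complex.coe_smul, ← map_smul, Complex.coe_smul, ← hscalar, map_mul, hstar,
      hB.apply_apply]
  rcases (norm_nonneg (a * star a)).eq_or_lt with hzero | hpos
  · rw [← hzero, zero_smul, CStarRing.mul_star_self_eq_zero_iff] at hscalar
    subst hscalar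
    have hp0 : p = 0 := eq_zero_of_existsUnique_corner ι hp hph hhp (by simpa using hcp _ hpwp)
    exact K0Eq.of_mul_star (v := 0) (by simp [hp0]) (by simp [hp0])
  · exact K0Eq.of_mul_star_eq_smul hpos hscalar hstar_mul

/-- Proposition 5.10: Let `A` be a simple unital C*-algebra,
`B = A ⋊_α ℤ/2ℤ`, and `p ∈ A` a projection with `[p] ≠ [α(p)]` in `K₀(A)`.  Then the
inclusion `pAp ⊆ pBp` is not a `ℤ/2ℤ`-crossed-product inclusion: there is no
self-adjoint unitary `w` of the corner `pBp` normalizing `pAp` such that every element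
of `pBp` is uniquely of the form `a₀ + a₁ w` with `a₀, a₁ ∈ pAp`. -/
theorem stmt_19 {A B : Type*} [CStarAlgebra A] [CStarAlgebra B]
    (hA : IsSimpleCStar A)
    (ι : A →⋆ₐ[ℂ] B) (hι : Function.Injective ι)
    (α : A ≃⋆ₐ[ℂ] A) (hα : ∀ a, α (α a) = a)
    (u : B) (hus : star u = u) (huu : u * u = 1)
    (hcov : ∀ a : A, u * ι a * u = ι (α a))
    (hdecomp : ∀ b : B, ∃! c : A × A, b = ι c.1 + ι c.2 * u)
    (p : A) (hp : p * p = p) (hps : star p = p)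
    (hK : ¬ K0Eq p (α p)) :
    ¬ ∃ w : B, star w = w ∧ w * w = ι p ∧ ι p * w * ι p = w ∧
      (∀ a : A, ∃ a' : A, w * ι (p * a * p) * w = ι (p * a' * p)) ∧
      (∀ b : B, ι p * b * ι p = b →
        ∃! c : A × A, b = ι (p * c.1 * p) + ι (p * c.2 * p) * w) :=
  stmt_19_general hA ι α u hus huu hcov hdecomp p hp hps hK
end
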